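/- arXiv:2205.11440 — 2 statements merged into one kernel-verified Lean document; each statement's English description precedes it below -/
import Mathlib

section
/- Let α, λ > 0, K ≥ 2, and y ∈ ℝ. Suppose sequences F_1, …, F_K : ℕ → ℝ satisfy F_k(r) = (1/(α+λ))·(α·y + (λ/(K−1))·Σ_{k'≠k} F_{k'}(r−1)) for all r ≥ 1 and all k. Then for every k, F_k(r) → y as r → ∞. -/
/-! The deviations `e_k(r) = F_k(r) - y` satisfy `e_k(r+1) = c · mean_{k' ≠ k} e_{k'}(r)` with
`c = λ / (α + λ) ∈ [0, 1)`. An average of `K - 1` coordinates is bounded by the sup norm, so the sup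
norm of the deviation vector contracts by the factor `c` at every round and decays geometrically. -/

open Filter Topology

theorem tendsto_nhds_zero_of_norm_succ_le_mul {E : Type*} [SeminormedAddCommGroup E] {u : ℕ → E}
    {c : ℝ} (hc₀ : 0 ≤ c) (hc₁ : c < 1) (hu : ∀ n, ‖u (n + 1)‖ ≤ c * ‖u n‖) :
    Tendsto u atTop (𝓝 0) := by
  have hgeom : ∀ n, ‖u n‖ ≤ c ^ n * ‖u 0‖ := fun n =>
    le_geom (u := fun n => ‖u n‖) hc₀ n fun k _ => hu k
  have hlim : Tendsto (fun n => c ^ n * ‖u 0‖) atTop (𝓝 0) := by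
    simpa using (tendsto_pow_atTop_nhds_zero_of_lt_one hc₀ hc₁).mul_const ‖u 0‖
  exact squeeze_zero_norm hgeom hlim

theorem norm_sum_erase_le_card_sub_one_mul_norm {ι E : Type*} [Fintype ι] [DecidableEq ι]
    [SeminormedAddCommGroup E] (v : ι → E) (i : ι) :
    ‖∑ j ∈ Finset.univ.erase i, v j‖ ≤ ((Fintype.card ι : ℝ) - 1) * ‖v‖ := by
  have hcard : ((Finset.univ.erase i).card : ℝ) = (Fintype.card ι : ℝ) - 1 := by
    rw [Finset.cast_card_erase_of_mem (Finset.mem_univ i), Finset.card_univ]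
  calc ‖∑ j ∈ Finset.univ.erase i, v j‖
      ≤ ∑ j ∈ Finset.univ.erase i, ‖v j‖ := norm_sum_le _ _
    _ ≤ ∑ _j ∈ Finset.univ.erase i, ‖v‖ := Finset.sum_le_sum fun j _ => norm_le_pi_norm v j
    _ = ((Fintype.card ι : ℝ) - 1) * ‖v‖ := by rw [Finset.sum_const, nsmul_eq_mul, hcard]

theorem norm_smul_sum_erase_le {ι E : Type*} [Fintype ι] [DecidableEq ι]
    [SeminormedAddCommGroup E] [NormedSpace ℝ E] (hι : 1 < Fintype.card ι) {c : ℝ} (hc : 0 ≤ c)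
    (v : ι → E) :
    ‖fun i => (c / ((Fintype.card ι : ℝ) - 1)) • ∑ j ∈ Finset.univ.erase i, v j‖ ≤ c * ‖v‖ := by
  have hι₁ : (0 : ℝ) < Fintype.card ι - 1 := by
    have : (1 : ℝ) < Fintype.card ι := by exact_mod_cast hι
    linarith
  refine (pi_norm_le_iff_of_nonneg (by positivity)).2 fun i => ?_
  calc ‖(c / ((Fintype.card ι : ℝ) - 1)) • ∑ j ∈ Finset.univ.erase i, v j‖
      = c / ((Fintype.card ι : ℝ) - 1) * ‖∑ j ∈ Finset.univ.erase i, v j‖ := by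
        rw [norm_smul, Real.norm_of_nonneg (by positivity)]
    _ ≤ c / ((Fintype.card ι : ℝ) - 1) * (((Fintype.card ι : ℝ) - 1) * ‖v‖) := by
        gcongr
        exact norm_sum_erase_le_card_sub_one_mul_norm v i
    _ = c * ‖v‖ := by field_simp

theorem fd_students_converge (a l y : ℝ) (ha : 0 < a) (hl : 0 < l)
    (K : ℕ) (hK : 2 ≤ K) (F : Fin K → ℕ → ℝ)
    (hF : ∀ k, ∀ r : ℕ, 1 ≤ r →
      F k r = (1 / (a + l)) *
        (a * y + (l / ((K : ℝ) - 1)) * ∑ k' ∈ Finset.univ.erase k, F k' (r - 1))) :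
    ∀ k, Tendsto (F k) atTop (𝓝 y) := by
  have hK₁ : (0 : ℝ) < K - 1 := by
    have : (2 : ℝ) ≤ K := by exact_mod_cast hK
    linarith
  set c := l / (a + l)
  set e : ℕ → Fin K → ℝ := fun r k => F k r - y
  have he_succ : ∀ r, e (r + 1) = fun k =>
      (c / ((Fintype.card (Fin K) : ℝ) - 1)) • ∑ k' ∈ Finset.univ.erase k, e r k' := by
    intro r
    funext k
    have hcard : ((Finset.univ.erase k).card : ℝ) = K - 1 := by
      rw [Finset.cast_card_erase_of_mem (Finset.mem_univ k), Finset.card_univ, Fintype.card_fin]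
    simp only [e, hF k (r + 1) (by omega), Nat.add_sub_cancel, Finset.sum_sub_distrib,
      Finset.sum_const, nsmul_eq_mul, hcard, c, Fintype.card_fin, smul_eq_mul]
    field_simp
    ring
  have he : Tendsto e atTop (𝓝 0) :=
    tendsto_nhds_zero_of_norm_succ_le_mul (by positivity)
      ((div_lt_one (by positivity)).2 (by linarith)) fun r =>
      he_succ r ▸ norm_smul_sum_erase_le (by rw [Fintype.card_fin]; omega) (by positivity) (e r)
  intro k
  simpa [e] using ((continuous_apply k).tendsto 0).comp he |>.add_const y
end

section
/- Let α, λ > 0, K ≥ 2, and suppose a sequence (u_r) of real numbers satisfies the linear recurrence u_{r+1} = [(K−2)λ/((K−1)(α+λ))]·u_r + [λ²/((K−1)(α+λ)²)]·u_{r−1} + λ²αy/((K−1)(α+λ)²) + λαy/(α+λ) for all r ≥ 1. Then u_r → λ·y as r → ∞. -/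
open Filter Topology

/-!
The deviation `u r - λ y` satisfies the homogeneous recurrence with coefficients
`p = (K - 2) λ / ((K - 1)(α + λ))` and `q = λ² / ((K - 1)(α + λ)²)`, both nonnegative with
`p + q < 1`. For any `σ < 1` with `p σ + q ≤ σ ²` (e.g. `σ ² = (1 + p + q) / 2`) a bound
`C σ ^ n` on the deviation propagates by two-step induction, so the deviation tends to `0`.
-/

theorem le_mul_pow_of_le_two_step {w : ℕ → ℝ} {p q σ C : ℝ} (hp : 0 ≤ p) (hq : 0 ≤ q)
    (hσ : 0 ≤ σ) (hC : 0 ≤ C) (hσpq : p * σ + q ≤ σ ^ 2)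
    (hw : ∀ n, w (n + 2) ≤ p * w (n + 1) + q * w n) (h0 : w 0 ≤ C) (h1 : w 1 ≤ C * σ) :
    ∀ n, w n ≤ C * σ ^ n := by
  intro n
  induction n using Nat.twoStepInduction with
  | zero => simpa using h0
  | one => simpa using h1
  | more n ih0 ih1 =>
    calc w (n + 2) ≤ p * w (n + 1) + q * w n := hw n
      _ ≤ p * (C * σ ^ (n + 1)) + q * (C * σ ^ n) := by gcongr
      _ = C * σ ^ n * (p * σ + q) := by ring
      _ ≤ C * σ ^ n * σ ^ 2 := by gcongr
      _ = C * σ ^ (n + 2) := by ring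

theorem tendsto_zero_of_two_step_recurrence {v : ℕ → ℝ} {p q : ℝ} (hpq : |p| + |q| < 1)
    (hv : ∀ n, v (n + 2) = p * v (n + 1) + q * v n) : Tendsto v atTop (𝓝 0) := by
  set σ := √((1 + |p| + |q|) / 2)
  have hσ_pos : 0 < σ := Real.sqrt_pos.mpr (by positivity)
  have hσ_lt : σ < 1 := (Real.sqrt_lt' one_pos).mpr (by rw [one_pow]; linarith)
  have hσ_sq : σ ^ 2 = (1 + |p| + |q|) / 2 := Real.sq_sqrt (by positivity)
  have hσpq : |p| * σ + |q| ≤ σ ^ 2 := by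
    nlinarith [mul_le_mul_of_nonneg_left hσ_lt.le (abs_nonneg p)]
  have habs : ∀ n, |v (n + 2)| ≤ |p| * |v (n + 1)| + |q| * |v n| := fun n => by
    rw [hv, ← abs_mul, ← abs_mul]
    exact abs_add_le _ _
  set C := max |v 0| (|v 1| / σ)
  have hbound := le_mul_pow_of_le_two_step (w := fun n => |v n|) (abs_nonneg p) (abs_nonneg q)
    hσ_pos.le ((abs_nonneg _).trans (le_max_left _ _)) hσpq habs (le_max_left _ _)
    ((div_le_iff₀ hσ_pos).mp (le_max_right _ _))
  have hgeom : Tendsto (fun n => C * σ ^ n) atTop (𝓝 0) := by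
    simpa using (tendsto_pow_atTop_nhds_zero_of_lt_one hσ_pos.le hσ_lt).const_mul C
  exact squeeze_zero_norm hbound hgeom

theorem fd_coeffs_abs_add_abs_lt_one {a l K : ℝ} (ha : 0 < a) (hl : 0 < l) (hK : 2 ≤ K) :
    |(K - 2) * l / ((K - 1) * (a + l))| + |l ^ 2 / ((K - 1) * (a + l) ^ 2)| < 1 := by
  have hK1 : 0 < K - 1 := by linarith
  have hal : 0 < a + l := by linarith
  rw [abs_of_nonneg (div_nonneg (mul_nonneg (by linarith) hl.le) (by positivity)),
    abs_of_nonneg (by positivity), div_add_div _ _ (by positivity) (by positivity),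
    div_lt_one (by positivity)]
  nlinarith [mul_pos (mul_pos hK1 hal) (add_pos (mul_pos (mul_pos hK1 ha) hal) (mul_pos ha hl))]

theorem fd_fixed_point {a l y K : ℝ} (hal : a + l ≠ 0) (hK : K - 1 ≠ 0) :
    (K - 2) * l / ((K - 1) * (a + l)) * (l * y) + l ^ 2 / ((K - 1) * (a + l) ^ 2) * (l * y)
      + l ^ 2 * a * y / ((K - 1) * (a + l) ^ 2) + l * a * y / (a + l) = l * y := by
  field_simp
  ring

theorem fd_recurrence_converges (a l y : ℝ) (ha : 0 < a) (hl : 0 < l)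
    (K : ℕ) (hK : 2 ≤ K) (u : ℕ → ℝ)
    (hu : ∀ r : ℕ, 1 ≤ r →
      u (r + 1) = (((K : ℝ) - 2) * l / (((K : ℝ) - 1) * (a + l))) * u r
        + (l ^ 2 / (((K : ℝ) - 1) * (a + l) ^ 2)) * u (r - 1)
        + l ^ 2 * a * y / (((K : ℝ) - 1) * (a + l) ^ 2)
        + l * a * y / (a + l)) :
    Tendsto u atTop (𝓝 (l * y)) := by
  have hK' : (2 : ℝ) ≤ K := by exact_mod_cast hK
  have hfix := fd_fixed_point (y := y) (by linarith : a + l ≠ 0) (by linarith : (K : ℝ) - 1 ≠ 0)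
  have hdev : ∀ n, u (n + 1 + 2) - l * y
      = ((K : ℝ) - 2) * l / (((K : ℝ) - 1) * (a + l)) * (u (n + 1 + 1) - l * y)
        + l ^ 2 / (((K : ℝ) - 1) * (a + l) ^ 2) * (u (n + 1) - l * y) := fun n => by
    have h := hu (n + 2) (by omega)
    rw [show n + 2 - 1 = n + 1 by omega] at h
    rw [show n + 1 + 2 = n + 2 + 1 by ring, h]
    linear_combination hfix
  have hlim := (tendsto_zero_of_two_step_recurrence (v := fun n => u (n + 1) - l * y)
    (fd_coeffs_abs_add_abs_lt_one ha hl hK') hdev).add_const (l * y)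
  rw [← tendsto_add_atTop_iff_nat 1]
  simpa using hlim
end
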